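/- Let $0 < p < q \leq \infty$ and let $\Psi: (0,1] \to (0,\infty)$ be an admissible function that does not satisfy $\sum_{j\geq 0}\Psi(2^{-j})^{\chi} < \infty$ with $\chi = qp/(q-p)$ (resp. $\chi = p$ if $q = \infty$). If $q < \infty$ and $\Psi$ is increasing, assume additionally $\chi < 1/c_\infty$ where $c_\infty = \sup_{0<t\leq 1}\log_2(\Psi(t)/\Psi(t^2))$. Then there exists a sequence $(\lambda_{j,k})_{j,k\geq 0}$ of nonnegative reals with $\big(\sum_{j\geq 0}\big(\sum_{k\geq 0}\lambda_{j,k}^p\big)^{q/p}\big)^{1/q} < \infty$ and $\big(\sum_{j\geq 0} 2^{jq/p}\lambda_{j,\lfloor 2^jx\rfloor}^q \Psi(2^{-j})^q\big)^{1/q} = \infty$ for every $x \in [1,2)$ (usual modification for $q=\infty$). -/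

import Mathlib

/-!
Cut `ℕ` into consecutive blocks `[n_m, n_{m+1})` on which `T_m = ∑ a_j` is as large as we
like; this is where `∑ a_j = ∞` enters. Inside block `m`, level `j` receives about
`4 · 2^j a_j / T_m` consecutive coefficients of height `w_m / (2^{j/p} Ψ(2^{-j}))`, the runs of
successive levels being laid end to end so that the dyadic intervals they index cover `[1, 2)`.
Hence every `x ∈ [1, 2)` meets, once in each block, a level with
`2^{j/p} λ_{j,⌊2^j x⌋} Ψ(2^{-j}) = w_m`, while the `j`-th row has `ℓ^p`-norm to the `p` at most
`4 a_j w_m^p / (T_m Ψ(2^{-j})^p)`. For `q = ∞` take `a_j = Ψ(2^{-j})^p`, `w_m = m + 1` and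
`T_m ≥ (m + 1)^p`; for `q < ∞` take `a_j = Ψ(2^{-j})^χ`, `w_m = 1` and `T_m ≥ 2^m`, so that the
`q/p`-th powers of the rows of block `m` add up to at most `4^{q/p} T_m^{1 - q/p}`.
-/

open scoped ENNReal

/-- A positive function on `(0,1]` is *admissible* if it is monotone and satisfies
`Ψ(2^{-j}) ∼ Ψ(2^{-2j})` uniformly in `j ∈ ℕ`. -/
def Admissible (Ψ : ℝ → ℝ) : Prop :=
  (∀ t ∈ Set.Ioc (0 : ℝ) 1, 0 < Ψ t) ∧
    (MonotoneOn Ψ (Set.Ioc (0 : ℝ) 1) ∨ AntitoneOn Ψ (Set.Ioc (0 : ℝ) 1)) ∧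
    ∃ c C : ℝ, 0 < c ∧
      ∀ j : ℕ, c * Ψ ((2 : ℝ) ^ (-(2 * j : ℝ))) ≤ Ψ ((2 : ℝ) ^ (-(j : ℝ))) ∧
        Ψ ((2 : ℝ) ^ (-(j : ℝ))) ≤ C * Ψ ((2 : ℝ) ^ (-(2 * j : ℝ)))

open Finset Filter

lemma exists_mem_Ico_le_lt {α : Type*} [LinearOrder α] {S : ℕ → α} {A B : ℕ} {f : α}
    (hAB : A ≤ B) (hA : S A ≤ f) (hB : f < S B) :
    ∃ j ∈ Ico A B, S j ≤ f ∧ f < S (j + 1) := by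
  induction B, hAB using Nat.le_induction with
  | base => exact absurd hB (not_lt.2 hA)
  | succ B hAB ih =>
    by_cases h : f < S B
    · obtain ⟨j, hj, hSj⟩ := ih h
      exact ⟨j, Ico_subset_Ico_right B.le_succ hj, hSj⟩
    · exact ⟨B, mem_Ico.2 ⟨hAB, B.lt_succ_self⟩, not_lt.1 h, hB⟩

def stackOffset (N : ℕ → ℕ) (A j : ℕ) : ℕ := ∑ i ∈ Ico A j, N i * 2 ^ (j - i)

lemma cast_stackOffset (N : ℕ → ℕ) (A j : ℕ) :
    (stackOffset N A j : ℝ) = 2 ^ j * ∑ i ∈ Ico A j, (N i : ℝ) / 2 ^ i := by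
  rw [stackOffset, mul_sum]
  push_cast
  refine sum_congr rfl fun i hi => ?_
  rw [pow_sub₀ _ two_ne_zero (mem_Ico.1 hi).2.le]
  ring

lemma cast_stackOffset_add (N : ℕ → ℕ) {A j : ℕ} (hAj : A ≤ j) :
    (stackOffset N A j + N j : ℝ) = 2 ^ j * ∑ i ∈ Ico A (j + 1), (N i : ℝ) / 2 ^ i := by
  rw [sum_Ico_succ_top hAj, mul_add, ← cast_stackOffset]
  field_simp

/-- Laying the intervals `[O_j / 2^j, (O_j + N_j) / 2^j)`, `O_j = stackOffset N A j`, end to end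
covers `[0, 1)` as soon as their total length reaches `1`. -/
lemma exists_floor_mem_stack (N : ℕ → ℕ) {A B : ℕ}
    (hN : 1 ≤ ∑ i ∈ Ico A B, (N i : ℝ) / 2 ^ i) {f : ℝ} (hf0 : 0 ≤ f) (hf1 : f < 1) :
    ∃ j ∈ Ico A B, stackOffset N A j ≤ ⌊2 ^ j * f⌋₊ ∧
      ⌊2 ^ j * f⌋₊ < stackOffset N A j + N j := by
  have hAB : A ≤ B := by
    by_contra h
    rw [Ico_eq_empty (by omega), sum_empty] at hN
    norm_num at hN
  obtain ⟨j, hj, hjf, hfj⟩ :=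
    exists_mem_Ico_le_lt (S := fun j => ∑ i ∈ Ico A j, (N i : ℝ) / 2 ^ i) hAB
      (by simpa using hf0) (hf1.trans_le hN)
  have h2j : (0 : ℝ) < 2 ^ j := by positivity
  refine ⟨j, hj, Nat.le_floor ?_, (Nat.floor_lt (by positivity)).2 ?_⟩
  · rw [cast_stackOffset]
    exact mul_le_mul_of_nonneg_left hjf h2j.le
  · push_cast
    rw [cast_stackOffset_add N (mem_Ico.1 hj).1]
    exact mul_lt_mul_of_pos_left hfj h2j

lemma exists_dyadic_cover {A B : ℕ} (c : ℕ → ℝ) (hc : ∀ i, 0 ≤ c i)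
    (hsum : 1 ≤ ∑ i ∈ Ico A B, c i) :
    ∃ K : ℕ → Finset ℕ, (∀ j, ((K j).card : ℝ) ≤ 4 * 2 ^ j * c j) ∧
      ∀ x ∈ Set.Ico (1 : ℝ) 2, ∃ j ∈ Ico A B, ⌊2 ^ j * x⌋₊ ∈ K j := by
  set N : ℕ → ℕ := fun j => ⌊4 * 2 ^ j * c j⌋₊
  refine ⟨fun j => Ico (2 ^ j + stackOffset N A j) (2 ^ j + stackOffset N A j + N j),
    fun j => ?_, fun x hx => ?_⟩
  · rw [Nat.card_Ico, add_tsub_cancel_left]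
    exact Nat.floor_le (by have := hc j; positivity)
  -- the factor `4` leaves room for the rounding losses, which add up to at most `2`
  have hcover : 1 ≤ ∑ i ∈ Ico A B, (N i : ℝ) / 2 ^ i := by
    have hgeom : ∑ i ∈ Ico A B, (1 / 2 : ℝ) ^ i ≤ 2 := by
      refine (geom_sum_Ico_le_of_lt_one (by norm_num) (by norm_num)).trans ?_
      rw [div_le_iff₀ (by norm_num)]
      exact (pow_le_one₀ (by norm_num) (by norm_num)).trans (by norm_num)
    have hterm : ∀ i ∈ Ico A B, 4 * c i - (1 / 2 : ℝ) ^ i ≤ (N i : ℝ) / 2 ^ i := by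
      intro i _
      rw [le_div_iff₀ (by positivity), sub_mul, one_div_pow,
        one_div_mul_cancel (by positivity)]
      linarith [Nat.lt_floor_add_one (4 * 2 ^ i * c i)]
    have := sum_le_sum hterm
    rw [sum_sub_distrib, ← mul_sum] at this
    linarith
  obtain ⟨j, hj, hlo, hhi⟩ := exists_floor_mem_stack N hcover (f := x - 1)
    (by linarith [hx.1]) (by linarith [hx.2])
  have hfloor : ⌊2 ^ j * x⌋₊ = ⌊2 ^ j * (x - 1)⌋₊ + 2 ^ j := by
    rw [← Nat.floor_add_natCast (mul_nonneg (by positivity) (by linarith [hx.1]))]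
    push_cast
    ring_nf
  refine ⟨j, hj, mem_Ico.2 ⟨?_, ?_⟩⟩ <;> omega

lemma exists_strictMono_sum_Ico_ge {a : ℕ → ℝ} (ha : ∀ j, 0 ≤ a j) (hdiv : ¬ Summable a)
    (t : ℕ → ℝ) :
    ∃ n : ℕ → ℕ, StrictMono n ∧ n 0 = 0 ∧ ∀ m, t m ≤ ∑ j ∈ Ico (n m) (n (m + 1)), a j := by
  have htend := (not_summable_iff_tendsto_nat_atTop_of_nonneg ha).1 hdiv
  have hnext : ∀ (C : ℝ) (s : ℕ), ∃ N, s < N ∧ C ≤ ∑ j ∈ Ico s N, a j := by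
    intro C s
    obtain ⟨N, hN⟩ := eventually_atTop.1 (htend.eventually_ge_atTop (C + ∑ j ∈ range s, a j))
    refine ⟨max N (s + 1), by omega, ?_⟩
    rw [sum_Ico_eq_sub _ (by omega)]
    linarith [hN _ (le_max_left N (s + 1))]
  choose next hlt hge using hnext
  exact ⟨fun m => Nat.rec 0 (fun m s => next (t m) s) m,
    strictMono_nat_of_lt_succ fun m => hlt _ _, rfl, fun m => hge _ _⟩

def blockIndex (n : ℕ → ℕ) (j : ℕ) : ℕ := Nat.findGreatest (fun m => n m ≤ j) j

lemma blockIndex_eq {n : ℕ → ℕ} (hn : StrictMono n) {m j : ℕ}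
    (hj : j ∈ Ico (n m) (n (m + 1))) : blockIndex n j = m := by
  rw [mem_Ico] at hj
  refine Nat.findGreatest_eq_iff.2 ⟨hn.le_apply.trans hj.1, fun _ => hj.1, fun k hk _ => ?_⟩
  exact not_le.2 (hj.2.trans_le (hn.monotone hk))

lemma mem_Ico_blockIndex {n : ℕ → ℕ} (hn : StrictMono n) (h0 : n 0 = 0) (j : ℕ) :
    j ∈ Ico (n (blockIndex n j)) (n (blockIndex n j + 1)) := by
  refine mem_Ico.2 ⟨Nat.findGreatest_spec (P := fun m => n m ≤ j) (Nat.zero_le j) (by omega),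
    not_le.1 fun h => ?_⟩
  by_cases hj : blockIndex n j + 1 ≤ j
  · exact Nat.findGreatest_is_greatest (Nat.lt_succ_self _) hj h
  · have := hn.le_apply (x := blockIndex n j + 1)
    omega

lemma tsum_eq_tsum_sum_Ico {n : ℕ → ℕ} (hn : StrictMono n) (h0 : n 0 = 0) (f : ℕ → ℝ≥0∞) :
    ∑' j, f j = ∑' m, ∑ j ∈ Ico (n m) (n (m + 1)), f j := by
  have hpartial : ∀ M,
      ∑ j ∈ range (n M), f j = ∑ m ∈ range M, ∑ j ∈ Ico (n m) (n (m + 1)), f j := by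
    intro M
    induction M with
    | zero => simp [h0]
    | succ M ih => rw [sum_range_succ, ← ih, sum_range_add_sum_Ico _ (hn.monotone M.le_succ)]
  rw [ENNReal.tsum_eq_iSup_nat' hn.tendsto_atTop, ENNReal.tsum_eq_iSup_nat]
  simp only [hpartial]

lemma tsum_ofReal_ite_mem_rpow (K : Finset ℕ) {p : ℝ} (hp : 0 < p) (v : ℝ) :
    ∑' k, ENNReal.ofReal ((if k ∈ K then v else 0) ^ p) = K.card * ENNReal.ofReal (v ^ p) := by
  rw [tsum_eq_sum (s := K) fun k hk => by simp [hk, Real.zero_rpow hp.ne'], ← nsmul_eq_mul,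
    ← sum_const]
  exact sum_congr rfl fun k hk => by simp [hk]

lemma rpow_div_rpow_mul_rpow {p : ℝ} (hp : 0 < p) (j : ℕ) {w ψ : ℝ} (hw : 0 ≤ w) (hψ : 0 < ψ) :
    (w / (2 ^ ((j : ℝ) / p) * ψ)) ^ p = w ^ p / (2 ^ j * ψ ^ p) := by
  rw [Real.div_rpow hw (by positivity), Real.mul_rpow (by positivity) hψ.le,
    ← Real.rpow_mul zero_le_two, div_mul_cancel₀ _ hp.ne', Real.rpow_natCast]

theorem exists_family_of_blocks {p : ℝ} (hp : 0 < p) {ψ : ℕ → ℝ} (hψ : ∀ j, 0 < ψ j)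
    {a : ℕ → ℝ} (ha : ∀ j, 0 ≤ a j) {n : ℕ → ℕ} (hn : StrictMono n)
    (hT : ∀ m, 0 < ∑ j ∈ Ico (n m) (n (m + 1)), a j) {w : ℕ → ℝ} (hw : ∀ m, 0 ≤ w m) :
    ∃ lam : ℕ → ℕ → ℝ, (∀ j k, 0 ≤ lam j k) ∧
      (∀ m, ∀ j ∈ Ico (n m) (n (m + 1)), ∑' k, ENNReal.ofReal (lam j k ^ p) ≤
        ENNReal.ofReal (4 * (a j / ∑ i ∈ Ico (n m) (n (m + 1)), a i) * w m ^ p / ψ j ^ p)) ∧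
      ∀ x ∈ Set.Ico (1 : ℝ) 2, ∀ m, ∃ j ∈ Ico (n m) (n (m + 1)),
        2 ^ ((j : ℝ) / p) * lam j ⌊2 ^ j * x⌋₊ * ψ j = w m := by
  set T : ℕ → ℝ := fun m => ∑ j ∈ Ico (n m) (n (m + 1)), a j
  have hcover : ∀ m, ∃ K : ℕ → Finset ℕ, (∀ j, ((K j).card : ℝ) ≤ 4 * 2 ^ j * (a j / T m)) ∧
      ∀ x ∈ Set.Ico (1 : ℝ) 2, ∃ j ∈ Ico (n m) (n (m + 1)), ⌊2 ^ j * x⌋₊ ∈ K j := fun m =>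
    exists_dyadic_cover _ (fun j => div_nonneg (ha j) (hT m).le)
      (by rw [← sum_div, div_self (hT m).ne'])
  choose K hcard hmem using hcover
  set height : ℕ → ℕ → ℝ := fun m j => w m / (2 ^ ((j : ℝ) / p) * ψ j)
  refine ⟨fun j k => if k ∈ K (blockIndex n j) j then height (blockIndex n j) j else 0,
    fun j k => ?_, fun m j hj => ?_, fun x hx m => ?_⟩
  · have := hw (blockIndex n j)
    have := hψ j
    dsimp only
    split_ifs <;> positivity
  · simp only [blockIndex_eq hn hj]
    rw [tsum_ofReal_ite_mem_rpow _ hp, rpow_div_rpow_mul_rpow hp j (hw m) (hψ j),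
      ← ENNReal.ofReal_natCast, ← ENNReal.ofReal_mul (Nat.cast_nonneg _)]
    refine ENNReal.ofReal_le_ofReal ((mul_le_mul_of_nonneg_right (hcard m j)
      (by have := hw m; have := hψ j; positivity)).trans_eq ?_)
    simp only [T]
    field_simp
  · obtain ⟨j, hj, hjK⟩ := hmem m x hx
    refine ⟨j, hj, ?_⟩
    simp only [blockIndex_eq hn hj, if_pos hjK, height]
    field_simp [(hψ j).ne']

theorem exists_iSup_lt_top_iSup_orbit_eq_top {p : ℝ} (hp : 0 < p) {ψ : ℕ → ℝ}
    (hψ : ∀ j, 0 < ψ j) (hdiv : ¬ Summable fun j => ψ j ^ p) :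
    ∃ lam : ℕ → ℕ → ℝ, (∀ j k, 0 ≤ lam j k) ∧ (⨆ j, ∑' k, ENNReal.ofReal (lam j k ^ p)) < ⊤ ∧
      ∀ x ∈ Set.Ico (1 : ℝ) 2,
        ⨆ j : ℕ, ENNReal.ofReal (2 ^ ((j : ℝ) / p) * lam j ⌊2 ^ j * x⌋₊ * ψ j) = ⊤ := by
  have hψp : ∀ j, 0 < ψ j ^ p := fun j => Real.rpow_pos_of_pos (hψ j) p
  obtain ⟨n, hn, hn0, hT⟩ := exists_strictMono_sum_Ico_ge (fun j => (hψp j).le) hdiv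
    fun m => ((m : ℝ) + 1) ^ p
  have hTpos : ∀ m, 0 < ∑ j ∈ Ico (n m) (n (m + 1)), ψ j ^ p :=
    fun m => (by positivity : (0 : ℝ) < ((m : ℝ) + 1) ^ p).trans_le (hT m)
  obtain ⟨lam, hlam, hcol, horbit⟩ := exists_family_of_blocks hp hψ (fun j => (hψp j).le) hn
    hTpos (w := fun m => (m : ℝ) + 1) fun m => by positivity
  refine ⟨lam, hlam, (iSup_le fun j => ?_).trans_lt (ENNReal.ofReal_lt_top (r := 4)),
    fun x hx => ?_⟩
  · set m := blockIndex n j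
    refine (hcol m j (mem_Ico_blockIndex hn hn0 j)).trans (ENNReal.ofReal_le_ofReal ?_)
    rw [div_le_iff₀ (hψp j)]
    calc 4 * (ψ j ^ p / ∑ i ∈ Ico (n m) (n (m + 1)), ψ i ^ p) * ((m : ℝ) + 1) ^ p
        = 4 * ψ j ^ p * (((m : ℝ) + 1) ^ p / ∑ i ∈ Ico (n m) (n (m + 1)), ψ i ^ p) := by ring
      _ ≤ 4 * ψ j ^ p * 1 := by
        have := hψp j
        gcongr
        exact div_le_one_of_le₀ (hT m) (hTpos m).le
      _ = 4 * ψ j ^ p := mul_one _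
  · refine ENNReal.eq_top_of_forall_nnreal_le fun b => ?_
    obtain ⟨j, -, hj⟩ := horbit x hx ⌈(b : ℝ)⌉₊
    calc (b : ℝ≥0∞) = ENNReal.ofReal b := (ENNReal.ofReal_coe_nnreal).symm
      _ ≤ ENNReal.ofReal (⌈(b : ℝ)⌉₊ + 1) :=
        ENNReal.ofReal_le_ofReal ((Nat.le_ceil _).trans (le_add_of_nonneg_right zero_le_one))
      _ ≤ _ := by
        rw [← hj]
        exact le_iSup_of_le j le_rfl

theorem exists_tsum_rpow_lt_top_tsum_orbit_eq_top {p r : ℝ} (hp : 0 < p) (hpr : p < r)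
    {ψ : ℕ → ℝ} (hψ : ∀ j, 0 < ψ j) (hdiv : ¬ Summable fun j => ψ j ^ (r * p / (r - p))) :
    ∃ lam : ℕ → ℕ → ℝ, (∀ j k, 0 ≤ lam j k) ∧
      ∑' j, (∑' k, ENNReal.ofReal (lam j k ^ p)) ^ (r / p) < ⊤ ∧
      ∀ x ∈ Set.Ico (1 : ℝ) 2,
        ∑' j : ℕ, ENNReal.ofReal (2 ^ ((j : ℝ) / p) * lam j ⌊2 ^ j * x⌋₊ * ψ j) ^ r = ⊤ := by
  set χ := r * p / (r - p)
  set s := r / p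
  have hs : 1 < s := (one_lt_div hp).2 hpr
  have hexp : (χ - p) * s = χ := by
    simp only [χ, s]
    field_simp [(sub_pos.2 hpr).ne']
    ring
  have hψχ : ∀ j, 0 < ψ j ^ χ := fun j => Real.rpow_pos_of_pos (hψ j) χ
  obtain ⟨n, hn, hn0, hT⟩ := exists_strictMono_sum_Ico_ge (fun j => (hψχ j).le) hdiv
    fun m => (2 : ℝ) ^ m
  have hTpos : ∀ m, 0 < ∑ j ∈ Ico (n m) (n (m + 1)), ψ j ^ χ :=
    fun m => (by positivity : (0 : ℝ) < 2 ^ m).trans_le (hT m)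
  obtain ⟨lam, hlam, hcol, horbit⟩ := exists_family_of_blocks hp hψ (fun j => (hψχ j).le) hn
    hTpos (w := fun _ => 1) fun _ => zero_le_one
  set T : ℕ → ℝ := fun m => ∑ j ∈ Ico (n m) (n (m + 1)), ψ j ^ χ
  have hblock : ∀ m, ∑ j ∈ Ico (n m) (n (m + 1)), (∑' k, ENNReal.ofReal (lam j k ^ p)) ^ s ≤
      ENNReal.ofReal (4 ^ s * (2 ^ (1 - s)) ^ m) := by
    intro m
    have hTm := hTpos m
    have hterm : ∀ j ∈ Ico (n m) (n (m + 1)),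
        (∑' k, ENNReal.ofReal (lam j k ^ p)) ^ s ≤ ENNReal.ofReal (4 ^ s * ψ j ^ χ / T m ^ s) := by
      intro j hj
      have := hψ j
      have hcol' : 4 * (ψ j ^ χ / T m) * 1 ^ p / ψ j ^ p = 4 * ψ j ^ (χ - p) / T m := by
        rw [Real.one_rpow, Real.rpow_sub (hψ j)]
        ring
      grw [hcol m j hj, hcol', ENNReal.ofReal_rpow_of_nonneg (by positivity) (by linarith),
        Real.div_rpow (by positivity) hTm.le, Real.mul_rpow (by norm_num) (by positivity),
        ← Real.rpow_mul (hψ j).le, hexp]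
    calc ∑ j ∈ Ico (n m) (n (m + 1)), (∑' k, ENNReal.ofReal (lam j k ^ p)) ^ s
        ≤ ∑ j ∈ Ico (n m) (n (m + 1)), ENNReal.ofReal (4 ^ s * ψ j ^ χ / T m ^ s) :=
          sum_le_sum hterm
      _ = ENNReal.ofReal (4 ^ s * T m ^ (1 - s)) := by
          rw [← ENNReal.ofReal_sum_of_nonneg fun j _ => by have := hψ j; positivity, ← sum_div,
            ← mul_sum, Real.rpow_sub hTm, Real.rpow_one, mul_div_assoc]
      _ ≤ ENNReal.ofReal (4 ^ s * (2 ^ (1 - s)) ^ m) := by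
          refine ENNReal.ofReal_le_ofReal (mul_le_mul_of_nonneg_left ?_ (by positivity))
          rw [← Real.rpow_natCast, ← Real.rpow_mul zero_le_two, mul_comm, Real.rpow_mul
            zero_le_two, Real.rpow_natCast]
          exact Real.rpow_le_rpow_of_nonpos (by positivity) (hT m) (by linarith)
  have hρ : (2 : ℝ) ^ (1 - s) < 1 := Real.rpow_lt_one_of_one_lt_of_neg one_lt_two (by linarith)
  refine ⟨lam, hlam, ?_, fun x hx => ?_⟩
  · rw [tsum_eq_tsum_sum_Ico hn hn0]
    refine (ENNReal.tsum_le_tsum hblock).trans_lt ?_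
    rw [← ENNReal.ofReal_tsum_of_nonneg (fun m => by positivity)
      ((summable_geometric_of_lt_one (by positivity) hρ).mul_left _)]
    exact ENNReal.ofReal_lt_top
  · refine top_unique ?_
    rw [tsum_eq_tsum_sum_Ico hn hn0,
      ← ENNReal.tsum_const_eq_top_of_ne_zero (α := ℕ) one_ne_zero]
    refine ENNReal.tsum_le_tsum fun m => ?_
    obtain ⟨j, hj, hjx⟩ := horbit x hx m
    refine le_of_eq_of_le ?_ (single_le_sum (fun _ _ => zero_le) hj)
    rw [hjx, ENNReal.ofReal_one, ENNReal.one_rpow]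

theorem exists_weighted_bpq_orbit_divergent_general (p : ℝ) (q : ℝ≥0∞) (hp : 0 < p)
    (hpq : ENNReal.ofReal p < q) (Ψ : ℝ → ℝ) (hΨ : Admissible Ψ)
    (hdiv : ¬ Summable (fun j : ℕ =>
      Ψ ((2 : ℝ) ^ (-(j : ℝ))) ^ (if q = ⊤ then p else q.toReal * p / (q.toReal - p)))) :
    ∃ lam : ℕ → ℕ → ℝ, (∀ j k, 0 ≤ lam j k) ∧
      (if q = ⊤ then
          ⨆ j : ℕ, ∑' k : ℕ, ENNReal.ofReal (lam j k ^ p)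
        else
          ∑' j : ℕ, (∑' k : ℕ, ENNReal.ofReal (lam j k ^ p)) ^ (q.toReal / p)) < ⊤ ∧
      ∀ x ∈ Set.Ico (1 : ℝ) 2,
        (if q = ⊤ then
            ⨆ j : ℕ, ENNReal.ofReal ((2 : ℝ) ^ ((j : ℝ) / p) *
              lam j (Nat.floor ((2 : ℝ) ^ j * x)) * Ψ ((2 : ℝ) ^ (-(j : ℝ))))
          else
            ∑' j : ℕ, ENNReal.ofReal ((2 : ℝ) ^ ((j : ℝ) / p) *
              lam j (Nat.floor ((2 : ℝ) ^ j * x)) * Ψ ((2 : ℝ) ^ (-(j : ℝ)))) ^ q.toReal) = ⊤ := by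
  have hψ : ∀ j : ℕ, 0 < Ψ ((2 : ℝ) ^ (-(j : ℝ))) := fun j =>
    hΨ.1 _ ⟨by positivity, Real.rpow_le_one_of_one_le_of_nonpos one_le_two (by simp)⟩
  rcases eq_or_ne q ⊤ with rfl | hq
  · simp only [if_true] at hdiv ⊢
    exact exists_iSup_lt_top_iSup_orbit_eq_top hp hψ hdiv
  · have hpq' : p < q.toReal := by
      rwa [← ENNReal.ofReal_lt_ofReal_iff_of_nonneg hp.le, ENNReal.ofReal_toReal hq]
    simp only [hq, if_false] at hdiv ⊢
    exact exists_tsum_rpow_lt_top_tsum_orbit_eq_top hp hpq' hψ hdiv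

/-- Weighted counterexample sequence (Lemma 3.7): for `0 < p < q ≤ ∞` and an admissible `Ψ`
with `∑_j Ψ(2^{-j})^χ = ∞` (`χ = qp/(q-p)`, resp. `χ = p` if `q = ∞`), assuming in addition
`χ < 1/c_∞` when `q < ∞` and `Ψ` is increasing, there is a nonnegative sequence
`(λ_{j,k}) ∈ b_{p,q}` with `(∑_j 2^{jq/p} λ_{j,⌊2^j x⌋}^q Ψ(2^{-j})^q)^{1/q} = ∞` for every
`x ∈ [1,2)` (usual modification if `q = ∞`). -/
theorem exists_weighted_bpq_orbit_divergent (p : ℝ) (q : ℝ≥0∞) (hp : 0 < p)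
    (hpq : ENNReal.ofReal p < q) (Ψ : ℝ → ℝ) (hΨ : Admissible Ψ)
    (hdiv : ¬ Summable (fun j : ℕ =>
      Ψ ((2 : ℝ) ^ (-(j : ℝ))) ^ (if q = ⊤ then p else q.toReal * p / (q.toReal - p))))
    (hextra : q ≠ ⊤ → MonotoneOn Ψ (Set.Ioc (0 : ℝ) 1) →
      (if q = ⊤ then p else q.toReal * p / (q.toReal - p)) <
        1 / sSup ((fun t => Real.logb 2 (Ψ t / Ψ (t ^ 2))) '' Set.Ioc (0 : ℝ) 1)) :
    ∃ lam : ℕ → ℕ → ℝ, (∀ j k, 0 ≤ lam j k) ∧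
      (if q = ⊤ then
          ⨆ j : ℕ, ∑' k : ℕ, ENNReal.ofReal (lam j k ^ p)
        else
          ∑' j : ℕ, (∑' k : ℕ, ENNReal.ofReal (lam j k ^ p)) ^ (q.toReal / p)) < ⊤ ∧
      ∀ x ∈ Set.Ico (1 : ℝ) 2,
        (if q = ⊤ then
            ⨆ j : ℕ, ENNReal.ofReal ((2 : ℝ) ^ ((j : ℝ) / p) *
              lam j (Nat.floor ((2 : ℝ) ^ j * x)) * Ψ ((2 : ℝ) ^ (-(j : ℝ))))
          else
            ∑' j : ℕ, ENNReal.ofReal ((2 : ℝ) ^ ((j : ℝ) / p) *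
              lam j (Nat.floor ((2 : ℝ) ^ j * x)) * Ψ ((2 : ℝ) ^ (-(j : ℝ)))) ^ q.toReal) = ⊤ :=
  exists_weighted_bpq_orbit_divergent_general p q hp hpq Ψ hΨ hdiv
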